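/- Let H be a complex Hilbert space, k a natural number with 0 < k < dim H, and let φ : B(H) → B(H) be a positive unital linear map which maps the set of rank-k orthogonal projections in B(H) onto itself. Then every finite-rank operator on H is in the image under φ of the finite-rank operators, and consequently φ restricted to the compact operators C(H) has norm-dense range in C(H). -/

import Mathlib

variable {H : Type*} [NormedAddCommGroup H] [InnerProductSpace ℂ H] [CompleteSpace H]

/-- `P` is an orthogonal projection of rank `k` on `H`. -/
def IsRankProj (k : ℕ) (P : H →L[ℂ] H) : Prop :=
  IsSelfAdjoint P ∧ P * P = P ∧ Module.rank ℂ (LinearMap.range (P : H →ₗ[ℂ] H)) = k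

/-- `a` is a finite-rank operator: its range is finite-dimensional. -/
def IsFiniteRankOp (a : H →L[ℂ] H) : Prop :=
  FiniteDimensional ℂ (LinearMap.range (a : H →ₗ[ℂ] H))

/-!
Every finite-rank operator is a linear combination of rank-`k` projections. By polarization it
suffices to treat `|w⟩⟨w|` for a unit vector `w`; extend `w` to an orthonormal family
`v 0 = w, …, v k` and put `T = ∑ j |v j⟩⟨v j|`. The `k + 1` operators `T - |v j⟩⟨v j|` are rank-`k`
projections summing to `k • T`, so `T`, and then `|w⟩⟨w| = T - (T - |w⟩⟨w|)`, lie in their span.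
Hence a linear map permuting the rank-`k` projections maps the finite-rank operators onto
themselves, and these are dense in the compact operators: `P_V ∘ T` approximates a compact `T`
when `V` is spanned by a finite net of the image of the unit ball.
-/

open InnerProductSpace Module Submodule

section FiniteRank

variable (𝕜 E F : Type*) [RCLike 𝕜] [NormedAddCommGroup E] [NormedSpace 𝕜 E]
  [NormedAddCommGroup F] [NormedSpace 𝕜 F]

def finiteRankOperators : Submodule 𝕜 (E →L[𝕜] F) where
  carrier := {a | FiniteDimensional 𝕜 (LinearMap.range (a : E →ₗ[𝕜] F))}
  zero_mem' := Submodule.finiteDimensional_of_le (LinearMap.range_zero (M := E) (M₂ := F)).le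
  add_mem' {a b} (_ : FiniteDimensional 𝕜 _) (_ : FiniteDimensional 𝕜 _) :=
    Submodule.finiteDimensional_of_le (LinearMap.range_add_le (a : E →ₗ[𝕜] F) b)
  smul_mem' c a (_ : FiniteDimensional 𝕜 _) :=
    Submodule.finiteDimensional_of_le (LinearMap.range_smul_le_range (a : E →ₗ[𝕜] F) c)

variable {𝕜 E F}

theorem mem_finiteRankOperators {a : E →L[𝕜] F} :
    a ∈ finiteRankOperators 𝕜 E F ↔ FiniteDimensional 𝕜 (LinearMap.range (a : E →ₗ[𝕜] F)) :=
  Iff.rfl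

theorem isCompactOperator_of_mem_finiteRankOperators {a : E →L[𝕜] F}
    (ha : a ∈ finiteRankOperators 𝕜 E F) : IsCompactOperator a := by
  rw [mem_finiteRankOperators] at ha
  set V := LinearMap.range (a : E →ₗ[𝕜] F)
  have hcod : IsCompactOperator (a.codRestrict V (LinearMap.mem_range_self _)) :=
    isCompactOperator_of_locallyCompactSpace_dom _
  exact hcod.clm_comp V.subtypeL

theorem Submodule.norm_sub_starProjection_le {G : Type*} [NormedAddCommGroup G]
    [InnerProductSpace 𝕜 G] (U : Submodule 𝕜 G) [U.HasOrthogonalProjection] (y : G) {c : G}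
    (hc : c ∈ U) : ‖y - U.starProjection y‖ ≤ ‖y - c‖ := by
  rw [starProjection_minimal]
  exact ciInf_le ⟨0, Set.forall_mem_range.2 fun _ => norm_nonneg _⟩ (⟨c, hc⟩ : U)

theorem IsCompactOperator.mem_closure_finiteRankOperators {G : Type*} [NormedAddCommGroup G]
    [InnerProductSpace 𝕜 G] {T : E →L[𝕜] G} (hT : IsCompactOperator T) :
    T ∈ closure (finiteRankOperators 𝕜 E G : Set (E →L[𝕜] G)) := by
  refine Metric.mem_closure_iff.2 fun ε hε => ?_
  obtain ⟨t, -, ht, hcover⟩ := finite_cover_balls_of_compact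
    (hT.isCompact_closure_image_closedBall 1) (half_pos hε)
  set V := span 𝕜 t
  have : FiniteDimensional 𝕜 V := FiniteDimensional.span_of_finite 𝕜 ht
  refine ⟨V.starProjection ∘L T, ?_, ?_⟩
  · refine Submodule.finiteDimensional_of_le (S₂ := V) ?_
    rintro - ⟨x, rfl⟩
    exact V.starProjection_apply_mem (T x)
  · have hnorm : ‖T - V.starProjection ∘L T‖ ≤ ε / 2 := by
      refine ContinuousLinearMap.opNorm_le_of_unit_norm (half_pos hε).le fun x hx => ?_
      obtain ⟨c, hct, hc⟩ := Set.mem_iUnion₂.1 <|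
        hcover (subset_closure ⟨x, by simp [hx], rfl⟩)
      calc ‖T x - V.starProjection (T x)‖ ≤ ‖T x - c‖ :=
            V.norm_sub_starProjection_le (T x) (subset_span hct)
        _ ≤ ε / 2 := (mem_ball_iff_norm.1 hc).le
    rw [dist_eq_norm]
    linarith

end FiniteRank

section RankOne

theorem mem_span_rankOne_of_mem_finiteRankOperators {𝕜 E F : Type*} [RCLike 𝕜]
    [NormedAddCommGroup E] [InnerProductSpace 𝕜 E] [CompleteSpace E]
    [NormedAddCommGroup F] [InnerProductSpace 𝕜 F] [CompleteSpace F] {b : E →L[𝕜] F}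
    (hb : b ∈ finiteRankOperators 𝕜 E F) : b ∈ span 𝕜 {T | ∃ x y, rankOne 𝕜 x y = T} := by
  set V := LinearMap.range (b : E →ₗ[𝕜] F)
  have : FiniteDimensional 𝕜 V := hb
  let e := stdOrthonormalBasis 𝕜 V
  have hb : b = ∑ i, rankOne 𝕜 (e i : F) (ContinuousLinearMap.adjoint b (e i)) := by
    calc b = V.starProjection ∘L b := by
          ext x
          exact (V.starProjection_eq_self_iff.2 (LinearMap.mem_range_self _ x)).symm
      _ = _ := by
          simp only [e.starProjection_eq_sum_rankOne, ContinuousLinearMap.finsetSum_comp,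
            rankOne_comp]
  rw [hb]
  exact sum_mem fun i _ => subset_span ⟨_, _, rfl⟩

variable {E : Type*} [NormedAddCommGroup E] [InnerProductSpace ℂ E]

theorem rankOne_eq_polarization (u v : E) :
    rankOne ℂ u v = (4 : ℂ)⁻¹ • (rankOne ℂ (u + v) (u + v) - rankOne ℂ (u - v) (u - v)
      + Complex.I • rankOne ℂ (u + Complex.I • v) (u + Complex.I • v)
      - Complex.I • rankOne ℂ (u - Complex.I • v) (u - Complex.I • v)) := by
  simp only [map_add, map_sub, map_smul, map_smulₛₗ, add_apply, sub_apply, smul_apply, Complex.conj_I]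
  match_scalars <;> ring_nf <;> simp only [Complex.I_sq] <;> ring

theorem rankOne_mem_span_rankOne_self (u v : E) :
    rankOne ℂ u v ∈ span ℂ (Set.range fun w : E => rankOne ℂ w w) := by
  have h (w : E) : rankOne ℂ w w ∈ span ℂ (Set.range fun w : E => rankOne ℂ w w) :=
    subset_span ⟨w, rfl⟩
  rw [rankOne_eq_polarization]
  exact smul_mem _ _ <| sub_mem (add_mem (sub_mem (h _) (h _)) (smul_mem _ _ (h _)))
    (smul_mem _ _ (h _))

theorem finiteRankOperators_le_span_rankOne_self [CompleteSpace E] :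
    finiteRankOperators ℂ E E ≤ span ℂ (Set.range fun w : E => rankOne ℂ w w) := by
  intro b hb
  refine span_le.2 ?_ (mem_span_rankOne_of_mem_finiteRankOperators hb)
  rintro - ⟨u, v, rfl⟩
  exact rankOne_mem_span_rankOne_self u v

end RankOne

theorem exists_finiteDimensional_mem_le_finrank {K V : Type*} [DivisionRing K] [AddCommGroup V]
    [Module K V] {n : ℕ} (hn : (n : Cardinal) ≤ Module.rank K V) (x : V) :
    ∃ W : Submodule K V, FiniteDimensional K W ∧ x ∈ W ∧ n ≤ finrank K W := by
  classical
  obtain ⟨s, hcard, hs⟩ := le_rank_iff_exists_linearIndependent_finset.1 hn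
  refine ⟨span K (insert x s : Finset V), inferInstance, subset_span (by simp), ?_⟩
  calc n = finrank K (span K (s : Set V)) := by rw [finrank_span_finset_eq_card hs, hcard]
    _ ≤ _ := Submodule.finrank_mono (span_mono (by simp))

theorem exists_orthonormal_fin_succ_eq {𝕜 E : Type*} [RCLike 𝕜] [NormedAddCommGroup E]
    [InnerProductSpace 𝕜 E] {n : ℕ} (hn : ((n + 1 : ℕ) : Cardinal) ≤ Module.rank 𝕜 E)
    {u : E} (hu : ‖u‖ = 1) : ∃ v : Fin (n + 1) → E, Orthonormal 𝕜 v ∧ v 0 = u := by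
  obtain ⟨W, _, huW, hW⟩ := exists_finiteDimensional_mem_le_finrank hn u
  have hsingle : Orthonormal 𝕜 (({Fin.castLE hW 0} : Set (Fin (finrank 𝕜 W))).domRestrict
      fun _ => (⟨u, huW⟩ : W)) :=
    orthonormal_subsingleton_iff.2 fun _ => hu
  obtain ⟨b, hb⟩ := Orthonormal.exists_orthonormalBasis_extension_of_card_eq
    (Fintype.card_fin _).symm hsingle
  refine ⟨fun i => (b (Fin.castLE hW i) : E), ?_, ?_⟩
  · exact (b.orthonormal.comp _ (Fin.castLE_injective hW)).comp_linearIsometry W.subtypeₗᵢ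
  · simpa using congrArg Subtype.val (hb _ rfl)

theorem isRankProj_starProjection (U : Submodule ℂ H) [FiniteDimensional ℂ U] :
    IsRankProj (finrank ℂ U) U.starProjection :=
  ⟨isSelfAdjoint_starProjection U, U.isIdempotentElem_starProjection,
    by rw [range_starProjection, finrank_eq_rank]⟩

theorem isRankProj_sum_rankOne {ι : Type*} {v : ι → H} (hv : Orthonormal ℂ v) (s : Finset ι) :
    IsRankProj s.card (∑ i ∈ s, rankOne ℂ (v i) (v i)) := by
  classical
  let b := OrthonormalBasis.span hv s
  have hsum : ∑ i ∈ s, rankOne ℂ (v i) (v i) = (span ℂ (s.image v : Set H)).starProjection := by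
    rw [b.starProjection_eq_sum_rankOne, ← s.sum_coe_sort]
    simp only [b, OrthonormalBasis.span_apply]
  have hcard : finrank ℂ (span ℂ (s.image v : Set H)) = s.card := by
    rw [finrank_eq_card_basis b.toBasis, Fintype.card_coe]
  rw [hsum, ← hcard]
  exact isRankProj_starProjection _

theorem rankOne_self_mem_span_isRankProj_of_orthonormal {ι : Type*} [Fintype ι] {k : ℕ}
    (hk : 0 < k) (hcard : Fintype.card ι = k + 1) {v : ι → H} (hv : Orthonormal ℂ v) (i : ι) :
    rankOne ℂ (v i) (v i) ∈ span ℂ {P : H →L[ℂ] H | IsRankProj k P} := by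
  classical
  set R : ι → H →L[ℂ] H := fun j => rankOne ℂ (v j) (v j)
  set T := ∑ j, R j
  have hcompl (j : ι) : T - R j ∈ span ℂ {P : H →L[ℂ] H | IsRankProj k P} := by
    have h := isRankProj_sum_rankOne hv (Finset.univ.erase j)
    rw [Finset.card_erase_of_mem (Finset.mem_univ j), Finset.card_univ, hcard,
      Nat.add_sub_cancel, Finset.sum_erase_eq_sub (Finset.mem_univ j)] at h
    exact subset_span h
  have hT : T = (k : ℂ)⁻¹ • ∑ j, (T - R j) := by
    rw [Finset.sum_sub_distrib, Finset.sum_const, Finset.card_univ, hcard, succ_nsmul,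
      add_sub_cancel_right, ← Nat.cast_smul_eq_nsmul ℂ, inv_smul_smul₀ (by exact_mod_cast hk.ne')]
  have hTmem : T ∈ span ℂ {P : H →L[ℂ] H | IsRankProj k P} := by
    rw [hT]
    exact smul_mem _ _ (sum_mem fun j _ => hcompl j)
  simpa only [sub_sub_cancel] using sub_mem hTmem (hcompl i)

theorem rankOne_self_mem_span_isRankProj {k : ℕ} (hk : 0 < k)
    (hkdim : (k : Cardinal) < Module.rank ℂ H) (w : H) :
    rankOne ℂ w w ∈ span ℂ {P : H →L[ℂ] H | IsRankProj k P} := by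
  rcases eq_or_ne w 0 with rfl | hw
  · simp
  obtain ⟨c, u, hu, rfl⟩ : ∃ (c : ℂ) (u : H), ‖u‖ = 1 ∧ w = c • u :=
    ⟨‖w‖, _, norm_smul_inv_norm hw,
      (smul_inv_smul₀ (by exact_mod_cast norm_ne_zero_iff.2 hw) w).symm⟩
  obtain ⟨v, hv, rfl⟩ := exists_orthonormal_fin_succ_eq (𝕜 := ℂ)
    (by simpa using Cardinal.add_one_le_of_lt hkdim) hu
  simp only [map_smul, map_smulₛₗ, smul_apply]
  exact smul_mem _ _ <| smul_mem _ _ <|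
    rankOne_self_mem_span_isRankProj_of_orthonormal hk (Fintype.card_fin _) hv 0

theorem span_isRankProj_eq_finiteRankOperators {k : ℕ} (hk : 0 < k)
    (hkdim : (k : Cardinal) < Module.rank ℂ H) :
    span ℂ {P : H →L[ℂ] H | IsRankProj k P} = finiteRankOperators ℂ H H := by
  refine le_antisymm (span_le.2 fun P hP => ?_) ?_
  · exact finite_of_rank_eq_nat hP.2.2
  · refine finiteRankOperators_le_span_rankOne_self.trans (span_le.2 ?_)
    rintro - ⟨w, rfl⟩
    exact rankOne_self_mem_span_isRankProj hk hkdim w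

theorem finite_rank_in_image_and_dense_range_on_compacts_general
    (k : ℕ) (hk : 0 < k) (hkdim : (k : Cardinal) < Module.rank ℂ H)
    (φ : (H →L[ℂ] H) →ₗ[ℂ] (H →L[ℂ] H))
    (honto : φ '' {P | IsRankProj k P} = {P | IsRankProj k P}) :
    (∀ b : H →L[ℂ] H, IsFiniteRankOp b →
      ∃ a : H →L[ℂ] H, IsFiniteRankOp a ∧ φ a = b) ∧
    {a : H →L[ℂ] H | IsCompactOperator a} ⊆
      closure (φ '' {a : H →L[ℂ] H | IsCompactOperator a}) := by
  have hmap : (finiteRankOperators ℂ H H).map φ = finiteRankOperators ℂ H H := by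
    rw [← span_isRankProj_eq_finiteRankOperators hk hkdim, map_span, honto]
  have hsurj (b : H →L[ℂ] H) (hb : IsFiniteRankOp b) :
      ∃ a : H →L[ℂ] H, IsFiniteRankOp a ∧ φ a = b :=
    (hmap.symm ▸ hb : b ∈ (finiteRankOperators ℂ H H).map φ)
  refine ⟨hsurj, fun T hT => closure_mono ?_ hT.mem_closure_finiteRankOperators⟩
  intro b hb
  obtain ⟨a, ha, rfl⟩ := hsurj b hb
  exact ⟨a, isCompactOperator_of_mem_finiteRankOperators ha, rfl⟩

theorem finite_rank_in_image_and_dense_range_on_compacts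
    (k : ℕ) (hk : 0 < k) (hkdim : (k : Cardinal) < Module.rank ℂ H)
    (φ : (H →L[ℂ] H) →ₗ[ℂ] (H →L[ℂ] H))
    (hpos : ∀ a : H →L[ℂ] H, a.IsPositive → (φ a).IsPositive)
    (hunital : φ 1 = 1)
    (honto : φ '' {P | IsRankProj k P} = {P | IsRankProj k P}) :
    (∀ b : H →L[ℂ] H, IsFiniteRankOp b →
      ∃ a : H →L[ℂ] H, IsFiniteRankOp a ∧ φ a = b) ∧
    {a : H →L[ℂ] H | IsCompactOperator a} ⊆
      closure (φ '' {a : H →L[ℂ] H | IsCompactOperator a}) :=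
  finite_rank_in_image_and_dense_range_on_compacts_general k hk hkdim φ honto
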